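/- The integer 29 is not a norm from the extension ℚ(i) ⊆ ℚ(i)(√10); that is, there is no element z in ℚ(i)(√10) with N(z) = 29, where N is the field norm to ℚ(i). -/

import Mathlib

/-!
Every norm from `K(√d)` down to `K` has the form `a ^ 2 - d * b ^ 2` with `a, b ∈ K`. As
`29 ≡ 1 mod 4`, Hensel's lemma puts a square root of `-1` into `ℚ_[29]`, so `ℚ(i)` embeds into
`ℚ_[29]` and a norm equal to `29` would give `a ^ 2 - 10 * b ^ 2 = 29` in `ℚ_[29]`. Since `10` is
not a square modulo `29`, the form `x ^ 2 - 10 * y ^ 2` has no nontrivial zero modulo `29`, whence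
`‖a ^ 2 - 10 * b ^ 2‖ = max ‖a‖ ‖b‖ ^ 2` is an even power of `29`, while `‖29‖ = 29⁻¹`.
-/

open Polynomial

theorem Algebra.norm_eq_sq_sub_mul_sq {R S : Type*} [CommRing R] [Ring S] [Algebra R S]
    (b : Module.Basis (Fin 2) R S) (hb0 : b 0 = 1) {d : R} (hb1 : b 1 ^ 2 = algebraMap R S d)
    (z : S) : Algebra.norm R z = b.repr z 0 ^ 2 - d * b.repr z 1 ^ 2 := by
  have hz : z = b.repr z 0 • b 0 + b.repr z 1 • b 1 := by
    rw [← Fin.sum_univ_two (fun i ↦ b.repr z i • b i), b.sum_repr]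
  have hmul : z * b 1 = (d * b.repr z 1) • b 0 + b.repr z 0 • b 1 := by
    conv_lhs => rw [hz]
    rw [add_mul, smul_mul_assoc, smul_mul_assoc, hb0, one_mul, ← sq, hb1,
      Algebra.algebraMap_eq_smul_one, smul_smul, mul_comm, add_comm]
  rw [Algebra.norm_eq_matrix_det b, Matrix.det_fin_two]
  simp only [Algebra.leftMulMatrix_eq_repr_mul, hb0 ▸ mul_one z, hmul, map_add, map_smul,
    Module.Basis.repr_self, Finsupp.add_apply, Finsupp.smul_apply, Finsupp.single_apply,
    zero_ne_one, one_ne_zero, if_true, if_false, smul_eq_mul]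
  ring

theorem AdjoinRoot.exists_norm_eq_sq_sub_mul_sq {R : Type*} [CommRing R] [Nontrivial R] (d : R)
    (z : AdjoinRoot (X ^ 2 - C d)) : ∃ a b : R, Algebra.norm R z = a ^ 2 - d * b ^ 2 := by
  have hmonic : (X ^ 2 - C d).Monic := monic_X_pow_sub_C d two_ne_zero
  let b := (powerBasis' hmonic).basis.reindex (finCongr natDegree_X_pow_sub_C)
  have hb : ∀ i, b i = root (X ^ 2 - C d) ^ (i : ℕ) := fun i ↦ by
    rw [Module.Basis.reindex_apply, PowerBasis.basis_eq_pow, powerBasis'_gen]; rfl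
  have hroot : root (X ^ 2 - C d) ^ 2 = algebraMap R _ d := by
    have h := mk_self (f := X ^ 2 - C d)
    rwa [map_sub, map_pow, mk_X, mk_C, sub_eq_zero] at h
  exact ⟨_, _, Algebra.norm_eq_sq_sub_mul_sq b (by simp [hb]) (by simpa [hb] using hroot) z⟩

theorem IsPrimitiveRoot.of_sq_eq_neg_one {R : Type*} [CommRing R] [CharZero R] {t : R}
    (ht : t ^ 2 = -1) : IsPrimitiveRoot t 4 := by
  have h2 : ¬t ^ 2 ^ 1 = 1 := by norm_num [ht]
  have h4 : t ^ 2 ^ (1 + 1) = 1 := by norm_num [pow_mul t 2 2, ht]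
  simpa [orderOf_eq_prime_pow h2 h4] using IsPrimitiveRoot.orderOf t

theorem CyclotomicField.nonempty_ringHom_of_isPrimitiveRoot {n : ℕ} [NeZero n] {C : Type*}
    [CommRing C] [IsDomain C] [Algebra ℚ C] {t : C} (ht : IsPrimitiveRoot t n) :
    Nonempty (CyclotomicField n ℚ →+* C) :=
  -- `IsCyclotomicExtension` is stated for `CyclotomicField.algebra`, not for the `ℚ`-algebra
  -- structure `DivisionRing.toRatAlgebra` that elaboration picks, hence a ring hom.
  letI := CyclotomicField.algebra n ℚ
  letI := CyclotomicField.isCyclotomicExtension n ℚ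
  ⟨((IsCyclotomicExtension.zeta_spec n ℚ (CyclotomicField n ℚ)).embeddingsEquivPrimitiveRoots
    C (cyclotomic.irreducible_rat (NeZero.pos n))).symm
      ⟨t, (mem_primitiveRoots (NeZero.pos n)).mpr ht⟩⟩

theorem exists_norm_eq_max_norm {E : Type*} [Norm E] (a b : E) : ∃ c : E, ‖c‖ = max ‖a‖ ‖b‖ :=
  (max_choice ‖a‖ ‖b‖).elim (fun h ↦ ⟨a, h.symm⟩) (fun h ↦ ⟨b, h.symm⟩)

theorem eq_zero_of_sq_eq_mul_sq {F : Type*} [Field F] {d x y : F} (hd : ¬IsSquare d)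
    (h : x ^ 2 = d * y ^ 2) : x = 0 ∧ y = 0 := by
  obtain rfl : y = 0 := by
    by_contra hy
    exact hd ⟨x / y, by field_simp; rw [h]⟩
  simpa using h

namespace PadicInt

variable {p : ℕ} [Fact p.Prime]

theorem norm_lt_one_iff_toZMod_eq_zero {x : ℤ_[p]} : ‖x‖ < 1 ↔ toZMod x = 0 := by
  rw [← RingHom.mem_ker, ker_toZMod, IsLocalRing.mem_maximalIdeal, mem_nonunits]

theorem norm_lt_one_of_norm_sq_sub_mul_sq_lt_one {d : ℤ_[p]} (hd : ¬IsSquare (toZMod d))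
    {x y : ℤ_[p]} (h : ‖x ^ 2 - d * y ^ 2‖ < 1) : ‖x‖ < 1 ∧ ‖y‖ < 1 := by
  simp only [norm_lt_one_iff_toZMod_eq_zero, map_sub, map_mul, map_pow, sub_eq_zero] at h ⊢
  exact eq_zero_of_sq_eq_mul_sq hd h

theorem isSquare_of_isSquare_toZMod (hp : p ≠ 2) {d : ℤ_[p]} (hd : toZMod d ≠ 0)
    (hsq : IsSquare (toZMod d)) : IsSquare d := by
  obtain ⟨u, hu⟩ := hsq
  obtain ⟨a, rfl⟩ := ZMod.ringHom_surjective (toZMod : ℤ_[p] →+* ZMod p) u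
  have hF : ‖aeval a (X ^ 2 - C d)‖ < 1 := by
    simp [norm_lt_one_iff_toZMod_eq_zero, hu, sq]
  have hF' : ‖aeval a (derivative (X ^ 2 - C d))‖ = 1 := by
    have h2 : (2 : ZMod p) ≠ 0 := Ring.two_ne_zero (by rwa [ZMod.ringChar_zmod_n])
    have ha : toZMod a ≠ 0 := fun h ↦ hd (by simpa [h] using hu)
    have hder : aeval a (derivative (X ^ 2 - C d)) = 2 * a := by norm_num
    refine le_antisymm (norm_le_one _) (not_lt.mp fun h ↦ ?_)
    rw [hder, norm_lt_one_iff_toZMod_eq_zero, map_mul, map_ofNat] at h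
    exact mul_ne_zero h2 ha h
  obtain ⟨z, hz, -⟩ := hensels_lemma (F := X ^ 2 - C d) (a := a) (by rw [hF', one_pow]; exact hF)
  exact ⟨z, (by simpa [sub_eq_zero, sq] using hz : z * z = d).symm⟩

end PadicInt

namespace Padic

variable {p : ℕ} [Fact p.Prime]

theorem exists_sq_eq_neg_one (hp : p % 4 = 1) : ∃ t : ℚ_[p], t ^ 2 = -1 := by
  have hsq : IsSquare (-1 : ZMod p) := ZMod.exists_sq_eq_neg_one_iff.mpr (by omega)
  have hp2 : p ≠ 2 := by omega
  obtain ⟨t, ht⟩ := PadicInt.isSquare_of_isSquare_toZMod (d := -1) hp2 (by simp) (by simpa using hsq)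
  exact ⟨t, by simpa [sq] using congrArg ((↑) : ℤ_[p] → ℚ_[p]) ht.symm⟩

theorem norm_sq_sub_mul_sq {d : ℤ_[p]} (hd : ¬IsSquare (PadicInt.toZMod d)) (a b : ℚ_[p]) :
    ‖a ^ 2 - d * b ^ 2‖ = max ‖a‖ ‖b‖ ^ 2 := by
  obtain ⟨c, hc⟩ := exists_norm_eq_max_norm a b
  rcases eq_or_ne c 0 with rfl | hc0
  · obtain ⟨ha, hb⟩ := max_le_iff.mp (hc.symm.trans norm_zero).le
    simp [norm_le_zero_iff.mp ha, norm_le_zero_iff.mp hb]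
  have hc' : 0 < ‖c‖ := norm_pos_iff.mpr hc0
  -- Dividing by the coordinate of larger norm gives a primitive pair in `ℤ_[p]`.
  obtain ⟨x, hx⟩ : ∃ x : ℤ_[p], (x : ℚ_[p]) = a / c :=
    ⟨⟨a / c, by rw [norm_div, div_le_one hc', hc]; exact le_max_left _ _⟩, rfl⟩
  obtain ⟨y, hy⟩ : ∃ y : ℤ_[p], (y : ℚ_[p]) = b / c :=
    ⟨⟨b / c, by rw [norm_div, div_le_one hc', hc]; exact le_max_right _ _⟩, rfl⟩
  have hxy : ‖x ^ 2 - d * y ^ 2‖ = 1 := by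
    refine le_antisymm (PadicInt.norm_le_one _) (not_lt.mp fun h ↦ ?_)
    obtain ⟨hx1, hy1⟩ := PadicInt.norm_lt_one_of_norm_sq_sub_mul_sq_lt_one hd h
    have : ‖a / c‖ < 1 ∧ ‖b / c‖ < 1 := by
      rw [← hx, ← hy]; exact ⟨hx1, hy1⟩
    rw [norm_div, norm_div, div_lt_one hc', div_lt_one hc'] at this
    exact (max_lt this.1 this.2).ne' hc
  have : a ^ 2 - d * b ^ 2 = c ^ 2 * ((x ^ 2 - d * y ^ 2 : ℤ_[p]) : ℚ_[p]) := by
    push_cast [hx, hy]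
    field_simp
  rw [this, norm_mul, norm_pow, PadicInt.padic_norm_e_of_padicInt, hxy, hc, mul_one]

theorem sq_sub_mul_sq_ne_p {d : ℤ_[p]} (hd : ¬IsSquare (PadicInt.toZMod d)) (a b : ℚ_[p]) :
    a ^ 2 - d * b ^ 2 ≠ p := by
  intro h
  have hnorm := norm_sq_sub_mul_sq hd a b
  obtain ⟨c, hc⟩ := exists_norm_eq_max_norm a b
  rw [h, norm_p, ← hc] at hnorm
  have hc0 : c ≠ 0 := by rintro rfl; simp [(Fact.out : p.Prime).ne_zero] at hnorm
  rw [norm_eq_zpow_neg_valuation hc0, ← zpow_natCast, ← zpow_mul, ← zpow_neg_one] at hnorm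
  have hp : (1 : ℝ) < p := by exact_mod_cast (Fact.out : p.Prime).one_lt
  have := zpow_right_injective₀ (by linarith) hp.ne' hnorm
  omega

end Padic

/-- `29` is not a norm from the extension `ℚ(i) ⊆ ℚ(i)(√10)`. -/
theorem stmt11 :
    ¬ ∃ z : AdjoinRoot (X ^ 2 - C (10 : CyclotomicField 4 ℚ)),
        Algebra.norm (CyclotomicField 4 ℚ) z = 29 := by
  rintro ⟨z, hz⟩
  -- decided before the `Fact` instance enters the context, so that `decide` sees a closed goal
  have h10 : ¬IsSquare (10 : ZMod 29) := by decide
  have : Fact (Nat.Prime 29) := ⟨by norm_num⟩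
  obtain ⟨a, b, hab⟩ := AdjoinRoot.exists_norm_eq_sq_sub_mul_sq 10 z
  obtain ⟨t, ht⟩ := Padic.exists_sq_eq_neg_one (p := 29) (by norm_num)
  obtain ⟨φ⟩ := CyclotomicField.nonempty_ringHom_of_isPrimitiveRoot
    (IsPrimitiveRoot.of_sq_eq_neg_one ht)
  apply Padic.sq_sub_mul_sq_ne_p (d := 10) (by rwa [map_ofNat]) (φ a) (φ b)
  have := congrArg φ (hz ▸ hab).symm
  simp only [map_sub, map_mul, map_pow, map_ofNat] at this
  exact_mod_cast this
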